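/- Consider a mean-shift perturbation C1' = C1 + δ in the model Y = C1 + C2 + εY, X = C1 - C2 + εX. The predictor Ŷ = β2·C2 + β3·X with β2 = 1 + β3 has residual (1-β3)·(C1 + δ) + εY - β3·εX in the perturbed environment, so its risk there is E[(Y' - Ŷ')²] = (1-β3)²·E[(C1+δ)²] + Var(εY) + β3²·Var(εX) = (1-β3)²·(1+δ²) + Var(εY) + β3²·Var(εX). Similarly, the causal-only predictor Ŷ = C2 has risk (1+δ²) + Var(εY). Hence the risk difference is Δ(δ) = (1+δ²) - (1-β3)²·(1+δ²) - β3²·Var(εX) = (2β3 - β3²)(1+δ²) - β3²·Var(εX), which is increasing in δ² when 0 < β3 < 2; thus a mean shift of C1 never flips the preference toward the causal-only model when the proxy was weakly preferred at δ = 0. -/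

import Mathlib

open MeasureTheory ProbabilityTheory

lemma key19 {Ω : Type*} [MeasurableSpace Ω] (μ : Measure Ω) [IsProbabilityMeasure μ]
    (V : Fin 4 → Ω → ℝ)
    (hmeas : ∀ i, Measurable (V i))
    (hmem : ∀ i, MemLp (V i) 2 μ)
    (hIndep : iIndepFun V μ)
    (hmean : ∀ i, ∫ ω, V i ω ∂μ = 0)
    (a : Fin 4 → ℝ) (c : ℝ) :
    ∫ ω, (∑ i, a i * V i ω + c) ^ 2 ∂μ
      = ∑ i, (a i) ^ 2 * variance (V i) μ + c ^ 2 := by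
  set W : Fin 4 → Ω → ℝ := fun i ω => a i * V i ω with hW
  have hWmem : ∀ i, MemLp (W i) 2 μ := fun i => (hmem i).const_mul _
  have hWint : ∀ i, Integrable (W i) μ := fun i => (hWmem i).integrable one_le_two
  set S : Ω → ℝ := fun ω => ∑ i, W i ω with hS
  have hSeq : S = ∑ i, W i := by funext ω; simp [hS, Finset.sum_apply]
  have hSmem : MemLp S 2 μ := by
    rw [hSeq]; exact memLp_finset_sum' _ (fun i _ => hWmem i)
  have hSint : Integrable S μ := hSmem.integrable one_le_two
  have hSmean : ∫ ω, S ω ∂μ = 0 := by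
    rw [hS, integral_finset_sum _ (fun i _ => hWint i)]
    simp [hW, integral_const_mul, hmean]
  have hindepW : Set.Pairwise (↑(Finset.univ : Finset (Fin 4)))
      (fun i j => IndepFun (W i) (W j) μ) := by
    intro i _ j _ hij
    exact (hIndep.indepFun hij).comp (measurable_const_mul (a i)) (measurable_const_mul (a j))
  have hvarS : variance S μ = ∑ i, (a i) ^ 2 * variance (V i) μ := by
    rw [hSeq, IndepFun.variance_sum (fun i _ => hWmem i) hindepW]
    exact Finset.sum_congr rfl fun i _ => variance_const_mul (a i) (V i) μ
  have hS2 : ∫ ω, S ω ^ 2 ∂μ = variance S μ := by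
    rw [variance_eq_sub hSmem]
    simp [hSmean]
  have hexp : ∀ ω, (S ω + c) ^ 2 = S ω ^ 2 + (2 * c) * S ω + c ^ 2 := fun ω => by ring
  calc ∫ ω, (∑ i, a i * V i ω + c) ^ 2 ∂μ
      = ∫ ω, (S ω ^ 2 + (2 * c) * S ω + c ^ 2) ∂μ := by
        apply integral_congr_ae; filter_upwards with ω; rw [← hexp]
    _ = ∫ ω, S ω ^ 2 ∂μ + (2 * c) * ∫ ω, S ω ∂μ + c ^ 2 := by
        have h1 : Integrable (fun ω => S ω ^ 2) μ := hSmem.integrable_sq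
        have h2 : Integrable (fun ω => (2 * c) * S ω) μ := hSint.const_mul _
        rw [integral_add (f := fun ω => S ω ^ 2 + (2 * c) * S ω) (g := fun _ => c ^ 2)
            (h1.add h2) (integrable_const _),
          integral_add h1 h2, integral_const, integral_const_mul]
        simp
    _ = ∑ i, (a i) ^ 2 * variance (V i) μ + c ^ 2 := by
        rw [hS2, hvarS, hSmean]; ring

/-- Under a mean-shift perturbation `C1' = C1 + δ` in the model `Y = C1 + C2 + εY`,
`X = C1 - C2 + εX` (independent zero-mean components, `Var(C1) = Var(C2) = 1`), the
pooled full predictor `Ŷ = (1+β3)·C2 + β3·X'` has risk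
`(1-β3)²·(1+δ²) + Var(εY) + β3²·Var(εX)` and the causal-only predictor `Ŷ = C2` has
risk `(1+δ²) + Var(εY)`; the risk difference is
`Δ(δ) = (2β3 - β3²)(1+δ²) - β3²·Var(εX)`, which is increasing in `δ²` when
`0 < β3 < 2`; hence a mean shift of `C1` never flips the preference toward the
causal-only model when the proxy was weakly preferred at `δ = 0`.
Here `V 0 = C1`, `V 1 = C2`, `V 2 = εY`, `V 3 = εX`. -/
theorem stmt19 {Ω : Type*} [MeasurableSpace Ω] (μ : Measure Ω) [IsProbabilityMeasure μ]
    (V : Fin 4 → Ω → ℝ)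
    (hmeas : ∀ i, Measurable (V i))
    (hmem : ∀ i, MemLp (V i) 2 μ)
    (hIndep : iIndepFun V μ)
    (hmean : ∀ i, ∫ ω, V i ω ∂μ = 0)
    (hvarC1 : variance (V 0) μ = 1) (hvarC2 : variance (V 1) μ = 1)
    (δ β3 : ℝ) (hβpos : 0 < β3) (hβlt : β3 < 2)
    (Y' X' : Ω → ℝ)
    (hY' : Y' = fun ω => (V 0 ω + δ) + V 1 ω + V 2 ω)
    (hX' : X' = fun ω => (V 0 ω + δ) - V 1 ω + V 3 ω)
    (Δ : ℝ → ℝ)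
    (hΔ : ∀ d, Δ d = (2 * β3 - β3 ^ 2) * (1 + d ^ 2) - β3 ^ 2 * variance (V 3) μ) :
    (∫ ω, (Y' ω - ((1 + β3) * V 1 ω + β3 * X' ω)) ^ 2 ∂μ
        = (1 - β3) ^ 2 * (1 + δ ^ 2) + variance (V 2) μ + β3 ^ 2 * variance (V 3) μ) ∧
    (∫ ω, (Y' ω - V 1 ω) ^ 2 ∂μ = (1 + δ ^ 2) + variance (V 2) μ) ∧
    (∫ ω, (Y' ω - V 1 ω) ^ 2 ∂μ
        - ∫ ω, (Y' ω - ((1 + β3) * V 1 ω + β3 * X' ω)) ^ 2 ∂μ = Δ δ) ∧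
    (∀ d1 d2 : ℝ, d1 ^ 2 ≤ d2 ^ 2 → Δ d1 ≤ Δ d2) ∧
    (0 ≤ Δ 0 → ∀ d, 0 ≤ Δ d) := by
  have hfull : ∫ ω, (Y' ω - ((1 + β3) * V 1 ω + β3 * X' ω)) ^ 2 ∂μ
      = (1 - β3) ^ 2 * (1 + δ ^ 2) + variance (V 2) μ + β3 ^ 2 * variance (V 3) μ := by
    have h := key19 μ V hmeas hmem hIndep hmean ![1 - β3, 0, 1, -β3] ((1 - β3) * δ)
    rw [show (fun ω => (Y' ω - ((1 + β3) * V 1 ω + β3 * X' ω)) ^ 2)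
        = fun ω => (∑ i, ![1 - β3, 0, 1, -β3] i * V i ω + (1 - β3) * δ) ^ 2 by
      funext ω
      simp [hY', hX', Fin.sum_univ_four]
      ring]
    rw [h, Fin.sum_univ_four]
    simp [hvarC1, hvarC2]
    ring
  have hcausal : ∫ ω, (Y' ω - V 1 ω) ^ 2 ∂μ = (1 + δ ^ 2) + variance (V 2) μ := by
    have h := key19 μ V hmeas hmem hIndep hmean ![1, 0, 1, 0] δ
    rw [show (fun ω => (Y' ω - V 1 ω) ^ 2)
        = fun ω => (∑ i, ![1, 0, 1, 0] i * V i ω + δ) ^ 2 by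
      funext ω
      simp [hY', Fin.sum_univ_four]
      ring]
    rw [h, Fin.sum_univ_four]
    simp [hvarC1, hvarC2]
    ring
  have hmono : ∀ d1 d2 : ℝ, d1 ^ 2 ≤ d2 ^ 2 → Δ d1 ≤ Δ d2 := by
    intro d1 d2 h
    rw [hΔ, hΔ]
    have hc : 0 ≤ 2 * β3 - β3 ^ 2 := by nlinarith
    nlinarith [mul_le_mul_of_nonneg_left h hc]
  refine ⟨hfull, hcausal, ?_, hmono, ?_⟩
  · rw [hfull, hcausal, hΔ]; ring
  · intro h0 d
    exact le_trans h0 (hmono 0 d (by simpa using sq_nonneg d))
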